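/- arXiv:1411.3113 — 3 statements merged into one kernel-verified Lean document; each statement's English description precedes it below -/
import Mathlib

section
/- If u is a solution of the Lorenz '96 equation on [0,∞), then for all t ≥ 0 one has the energy bound |u(t)|² ≤ |u(0)|²·e^{−t} + J·F²·(1 − e^{−t}). -/
open scoped RealInnerProductSpace

noncomputable section

/-- The Lorenz '96 bilinear map `B` on `ℝ^J`, with cyclic indexing via `ZMod J`:
`B(u,w)^(j) = -(1/2)[w^(j-1)u^(j+1) + u^(j-1)w^(j+1) - w^(j-2)u^(j-1) - u^(j-2)w^(j-1)]`. -/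
def L96B {J : ℕ} [NeZero J] (u w : EuclideanSpace ℝ (ZMod J)) :
    EuclideanSpace ℝ (ZMod J) :=
  WithLp.toLp 2 (fun j => -(1/2 : ℝ) * (w (j - 1) * u (j + 1) + u (j - 1) * w (j + 1)
    - w (j - 2) * u (j - 1) - u (j - 2) * w (j - 1)))

/-- The constant forcing vector `f = (F, ..., F)`. -/
def L96f {J : ℕ} [NeZero J] (F : ℝ) : EuclideanSpace ℝ (ZMod J) := WithLp.toLp 2 (fun _ => F)

/-- `u` solves the Lorenz '96 equation `u' = -u - B(u,u) + f` on the set `I`. -/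
def L96Sol {J : ℕ} [NeZero J] (F : ℝ) (I : Set ℝ)
    (u : ℝ → EuclideanSpace ℝ (ZMod J)) : Prop :=
  ∀ t ∈ I, HasDerivAt u (-u t - L96B (u t) (u t) + L96f F) t

/-- The projection `P` setting to zero every third coordinate
(those with 1-based index `≡ 0 mod 3`, i.e. `ZMod J`-index with value `≡ 0 mod 3`
when `3 ∣ J`). -/
def L96P {J : ℕ} [NeZero J] (u : EuclideanSpace ℝ (ZMod J)) :
    EuclideanSpace ℝ (ZMod J) :=
  WithLp.toLp 2 (fun j : ZMod J => if j.val % 3 = 0 then 0 else u j)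

/-- The complementary projection `Q = I - P`. -/
def L96Q {J : ℕ} [NeZero J] (u : EuclideanSpace ℝ (ZMod J)) :
    EuclideanSpace ℝ (ZMod J) :=
  u - L96P u

/-! Because `⟪B(u,u), u⟫ = 0` (the cyclic sum telescopes under the shift `j ↦ j + 1`), the
energy `E = ‖u‖²` satisfies `E' = -2E + 2⟪u, f⟫ ≤ -E + ‖f‖² = -E + J F²` by Cauchy–Schwarz and
AM–GM, and Grönwall's inequality with rate `-1` turns this into the claimed bound. -/

open Real Set

theorem le_exp_decay_of_hasDerivAt_le {g g' : ℝ → ℝ} {c : ℝ}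
    (hg : ∀ t ∈ Ici (0 : ℝ), HasDerivAt g (g' t) t) (hle : ∀ t ∈ Ici (0 : ℝ), g' t ≤ -g t + c)
    (t : ℝ) (ht : 0 ≤ t) : g t ≤ g 0 * exp (-t) + c * (1 - exp (-t)) := by
  have hgron := le_gronwallBound_of_liminf_deriv_right_le (f := g) (f' := g') (δ := g 0) (K := -1)
    (ε := c) (a := 0) (b := t)
    (fun s hs => (hg s hs.1).continuousAt.continuousWithinAt)
    (fun s hs _ hr => (hg s hs.1).hasDerivWithinAt.liminf_right_slope_le hr) le_rfl
    (fun s hs => by linarith [hle s hs.1]) t ⟨ht, le_rfl⟩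
  rw [gronwallBound_of_K_ne_0 (by norm_num)] at hgron
  convert hgron using 1
  simp only [sub_zero, neg_one_mul]
  ring

section Lorenz96

variable {J : ℕ} [NeZero J]

theorem inner_L96B_self_eq_zero (u : EuclideanSpace ℝ (ZMod J)) : ⟪L96B u u, u⟫ = 0 := by
  have hshift : ∑ j : ZMod J, u (j - 1) * u j * u (j + 1)
      = ∑ j : ZMod J, u (j - 2) * u (j - 1) * u j := by
    refine Fintype.sum_equiv (Equiv.addRight 1) _ _ fun j => ?_
    simp only [Equiv.coe_addRight, add_sub_cancel_right, show j + 1 - 2 = j - 1 by ring]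
  calc ⟪L96B u u, u⟫
      = ∑ j : ZMod J, (u (j - 2) * u (j - 1) * u j - u (j - 1) * u j * u (j + 1)) := by
        simp only [PiLp.inner_apply, L96B, RCLike.inner_apply, conj_trivial]
        refine Fintype.sum_congr _ _ fun j => ?_
        ring
    _ = 0 := by rw [Finset.sum_sub_distrib, hshift, sub_self]

theorem norm_L96f_sq (F : ℝ) : ‖(L96f F : EuclideanSpace ℝ (ZMod J))‖ ^ 2 = J * F ^ 2 := by
  simp [EuclideanSpace.norm_sq_eq, L96f]

theorem two_inner_L96_field_le (F : ℝ) (u : EuclideanSpace ℝ (ZMod J)) :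
    2 * ⟪u, -u - L96B u u + L96f F⟫ ≤ -‖u‖ ^ 2 + J * F ^ 2 := by
  have hcs := real_inner_le_norm u (L96f F)
  have hamgm := two_mul_le_add_sq ‖u‖ ‖(L96f F : EuclideanSpace ℝ (ZMod J))‖
  rw [inner_add_right, inner_sub_right, inner_neg_right, real_inner_self_eq_norm_sq,
    real_inner_comm, inner_L96B_self_eq_zero, ← norm_L96f_sq F]
  linarith

end Lorenz96

theorem l96_energy_bound_general {J : ℕ} [NeZero J] (F : ℝ)
    (u : ℝ → EuclideanSpace ℝ (ZMod J)) (hu : L96Sol F (Set.Ici 0) u) :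
    ∀ t : ℝ, 0 ≤ t →
      ‖u t‖ ^ 2 ≤ ‖u 0‖ ^ 2 * Real.exp (-t) + J * F ^ 2 * (1 - Real.exp (-t)) :=
  le_exp_decay_of_hasDerivAt_le (fun t ht => (hu t ht).norm_sq)
    (fun t _ => two_inner_L96_field_le F (u t))

/-- energy bound `|u(t)|² ≤ |u(0)|²e^{−t} + JF²(1 − e^{−t})` for any
solution of the Lorenz '96 equation on `[0,∞)`. -/
theorem l96_energy_bound {J : ℕ} [NeZero J] (hJ : 3 ≤ J) (F : ℝ)
    (u : ℝ → EuclideanSpace ℝ (ZMod J)) (hu : L96Sol F (Set.Ici 0) u) :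
    ∀ t : ℝ, 0 ≤ t →
      ‖u t‖ ^ 2 ≤ ‖u 0‖ ^ 2 * Real.exp (-t) + J * F ^ 2 * (1 - Real.exp (-t)) :=
  l96_energy_bound_general F u hu
end
end

section
/- (Continuous synchronization filter converges.) Let F > 0, K = 2JF², and let v be a solution of the Lorenz '96 equation on [0,∞) with |v(0)|² ≤ K. Let q : [0,∞) → ℝ^J be differentiable with q(0) = Qq(0) and q'(t) = −q(t) − Q·B(Pv(t)+q(t), Pv(t)+q(t)) + Qf for all t ≥ 0, and set m(t) = Pv(t) + q(t). Then |m(t) − v(t)|² → 0 as t → ∞. -/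
open scoped RealInnerProductSpace

noncomputable section

/-!
On a `Q`-coordinate `j ≡ 0 (mod 3)` the formula for `B(u,u)^(j)` only involves the coordinates
`j - 2, j - 1, j + 1`, which are `P`-coordinates; hence `Q B(u,u) = Q B(Pu,Pu)`. The filter
equation gives `(Pq)' = -Pq` with `Pq(0) = 0`, so `q` stays in the range of `Q` and `Pm = Pv`.
Then `Q B(m,m) = Q B(v,v)`, the error `e = m - v` solves `e' = -e` exactly, and
`e(t) = e^{-t} e(0)`.
-/

open Filter Topology

theorem ZMod.val_mod_eq_zero_iff_castHom_eq_zero {m n : ℕ} [NeZero m] (h : n ∣ m) (j : ZMod m) :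
    j.val % n = 0 ↔ ZMod.castHom h (ZMod n) j = 0 := by
  rw [ZMod.castHom_apply, ← ZMod.natCast_val, ZMod.natCast_eq_zero_iff, Nat.dvd_iff_mod_eq_zero]

theorem eq_exp_neg_smul_of_hasDerivAt_neg {E : Type*} [NormedAddCommGroup E] [NormedSpace ℝ E]
    {f : ℝ → E} (hf : ∀ t, 0 ≤ t → HasDerivAt f (-f t) t) {t : ℝ} (ht : 0 ≤ t) :
    f t = Real.exp (-t) • f 0 := by
  have hg : ∀ s, 0 ≤ s → HasDerivAt (Real.exp • f) 0 s := fun s hs => by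
    simpa only [smul_neg, neg_add_cancel] using (Real.hasDerivAt_exp s).smul (hf s hs)
  have hconst := constant_of_has_deriv_right_zero
    (fun s hs => (hg s hs.1).continuousAt.continuousWithinAt)
    (fun s hs => (hg s hs.1).hasDerivWithinAt) t ⟨ht, le_rfl⟩
  rw [Pi.smul_apply', Pi.smul_apply', Real.exp_zero, one_smul] at hconst
  rw [← hconst, smul_smul, ← Real.exp_add, neg_add_cancel, Real.exp_zero, one_smul]

theorem tendsto_zero_of_hasDerivAt_neg {E : Type*} [NormedAddCommGroup E] [NormedSpace ℝ E]
    {f : ℝ → E} (hf : ∀ t, 0 ≤ t → HasDerivAt f (-f t) t) : Tendsto f atTop (𝓝 0) := by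
  have hlim : Tendsto (fun t => Real.exp (-t) • f 0) atTop (𝓝 0) := by
    simpa using Real.tendsto_exp_neg_atTop_nhds_zero.smul_const (f 0)
  refine hlim.congr' ?_
  filter_upwards [eventually_ge_atTop 0] with t ht
  exact (eq_exp_neg_smul_of_hasDerivAt_neg hf ht).symm

section L96

variable {J : ℕ} [NeZero J]

@[simp]
theorem L96P_apply (u : EuclideanSpace ℝ (ZMod J)) (j : ZMod J) :
    L96P u j = if j.val % 3 = 0 then 0 else u j := rfl

theorem L96Q_apply (u : EuclideanSpace ℝ (ZMod J)) (j : ZMod J) :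
    L96Q u j = if j.val % 3 = 0 then u j else 0 := by
  by_cases hj : j.val % 3 = 0 <;> simp [L96Q, hj]

def L96PCLM (J : ℕ) [NeZero J] : EuclideanSpace ℝ (ZMod J) →L[ℝ] EuclideanSpace ℝ (ZMod J) :=
  LinearMap.toContinuousLinearMap
    { toFun := L96P
      map_add' := fun u w => by ext j; by_cases hj : j.val % 3 = 0 <;> simp [hj]
      map_smul' := fun c u => by ext j; by_cases hj : j.val % 3 = 0 <;> simp [hj] }

theorem L96P_add (u w : EuclideanSpace ℝ (ZMod J)) : L96P (u + w) = L96P u + L96P w :=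
  map_add (L96PCLM J) u w

theorem L96P_sub (u w : EuclideanSpace ℝ (ZMod J)) : L96P (u - w) = L96P u - L96P w :=
  map_sub (L96PCLM J) u w

theorem L96P_neg (u : EuclideanSpace ℝ (ZMod J)) : L96P (-u) = -L96P u :=
  map_neg (L96PCLM J) u

theorem HasDerivAt.L96P {u : ℝ → EuclideanSpace ℝ (ZMod J)} {d : EuclideanSpace ℝ (ZMod J)}
    {t : ℝ} (h : HasDerivAt u d t) : HasDerivAt (fun s => L96P (u s)) (L96P d) t :=
  (L96PCLM J).hasFDerivAt.comp_hasDerivAt t h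

theorem L96P_L96P (u : EuclideanSpace ℝ (ZMod J)) : L96P (L96P u) = L96P u := by
  ext j; by_cases hj : j.val % 3 = 0 <;> simp [hj]

theorem L96P_L96Q (u : EuclideanSpace ℝ (ZMod J)) : L96P (L96Q u) = 0 := by
  ext j; by_cases hj : j.val % 3 = 0 <;> simp [L96Q_apply, hj]

theorem L96Q_L96B_L96P (h3 : 3 ∣ J) (u w : EuclideanSpace ℝ (ZMod J)) :
    L96Q (L96B (L96P u) (L96P w)) = L96Q (L96B u w) := by
  ext j
  rw [L96Q_apply, L96Q_apply]
  split_ifs with hj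
  · rw [ZMod.val_mod_eq_zero_iff_castHom_eq_zero h3] at hj
    have hP : ∀ (x : EuclideanSpace ℝ (ZMod J)) (k : ZMod J),
        ZMod.castHom h3 (ZMod 3) k ≠ 0 → L96P x k = x k := fun x k hk => by
      rw [L96P_apply, if_neg (by rwa [ZMod.val_mod_eq_zero_iff_castHom_eq_zero h3])]
    have hm1 : ZMod.castHom h3 (ZMod 3) (j - 1) ≠ 0 := by rw [map_sub, map_one, hj]; decide
    have hp1 : ZMod.castHom h3 (ZMod 3) (j + 1) ≠ 0 := by rw [map_add, map_one, hj]; decide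
    have hm2 : ZMod.castHom h3 (ZMod 3) (j - 2) ≠ 0 := by rw [map_sub, map_ofNat, hj]; decide
    simp only [L96B, PiLp.toLp_apply, hP _ _ hm1, hP _ _ hp1, hP _ _ hm2]
  · rfl

end L96

theorem l96_sync_filter_converges_general {J J' : ℕ} [NeZero J] (hJ : J = 3 * J')
    (F : ℝ)
    (v q : ℝ → EuclideanSpace ℝ (ZMod J))
    (hv : L96Sol F (Set.Ici 0) v)
    (hq0 : q 0 = L96Q (q 0))
    (hq : ∀ t : ℝ, 0 ≤ t → HasDerivAt q
      (-q t - L96Q (L96B (L96P (v t) + q t) (L96P (v t) + q t)) + L96Q (L96f F)) t) :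
    Filter.Tendsto (fun t : ℝ => ‖(L96P (v t) + q t) - v t‖ ^ 2)
      Filter.atTop (nhds 0) := by
  have hPq : ∀ t, 0 ≤ t → L96P (q t) = 0 := fun t ht => by
    have hder : ∀ s, 0 ≤ s → HasDerivAt (fun r => L96P (q r)) (-L96P (q s)) s := fun s hs => by
      simpa only [L96P_add, L96P_sub, L96P_neg, L96P_L96Q, sub_zero, add_zero] using
        (hq s hs).L96P
    rw [eq_exp_neg_smul_of_hasDerivAt_neg hder ht, hq0, L96P_L96Q, smul_zero]
  have hQB : ∀ t, 0 ≤ t → L96Q (L96B (L96P (v t) + q t) (L96P (v t) + q t)) =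
      L96Q (L96B (v t) (v t)) := fun t ht => by
    have hPm : L96P (L96P (v t) + q t) = L96P (v t) := by
      rw [L96P_add, L96P_L96P, hPq t ht, add_zero]
    rw [← L96Q_L96B_L96P ⟨J', hJ⟩, hPm, L96Q_L96B_L96P ⟨J', hJ⟩]
  have herr : ∀ t, 0 ≤ t → HasDerivAt (fun t => L96P (v t) + q t - v t)
      (-(L96P (v t) + q t - v t)) t := fun t ht => by
    refine (((hv t ht).L96P.add (hq t ht)).sub (hv t ht)).congr_deriv ?_
    rw [hQB t ht]
    simp only [L96Q, L96P_add, L96P_sub, L96P_neg]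
    abel
  simpa using (tendsto_zero_of_hasDerivAt_neg herr).norm.pow 2

/-- the continuous synchronization filter converges:
`|m(t) − v(t)|² → 0` as `t → ∞`, where `m = Pv + q`. -/
theorem l96_sync_filter_converges {J J' : ℕ} [NeZero J] (hJ' : 1 ≤ J') (hJ : J = 3 * J')
    (F : ℝ) (hF : 0 < F)
    (v q : ℝ → EuclideanSpace ℝ (ZMod J))
    (hv : L96Sol F (Set.Ici 0) v)
    (hv0 : ‖v 0‖ ^ 2 ≤ 2 * J * F ^ 2)
    (hq0 : q 0 = L96Q (q 0))
    (hq : ∀ t : ℝ, 0 ≤ t → HasDerivAt q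
      (-q t - L96Q (L96B (L96P (v t) + q t) (L96P (v t) + q t)) + L96Q (L96f F)) t) :
    Filter.Tendsto (fun t : ℝ => ‖(L96P (v t) + q t) - v t‖ ^ 2)
      Filter.atTop (nhds 0) :=
  l96_sync_filter_converges_general hJ F v q hv hq0 hq
end
end

section
/- (Two-solution growth bound.) Let F > 0, K = 2JF², and β = 2(2√K − 1). Let u and v be two solutions of the Lorenz '96 equation on an interval [0,T] with |v(t)|² ≤ K for all t ∈ [0,T]. Then for all t ∈ [0,T], |u(t) − v(t)|² ≤ |u(0) − v(0)|²·e^{βt}. -/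
open scoped RealInnerProductSpace

noncomputable section

/-!
With `z = u - v`, symmetry and bilinearity of `B` give `B(u,u) - B(v,v) = 2 B(v,z) + B(z,z)`.
The cubic term is orthogonal to `z` (energy conservation `⟨B(z,z), z⟩ = 0`), and after cyclic
shifts of the summation index `2 ⟨B(v,z), z⟩` is the difference of two sums `∑ v_a z_b z_c`,
each at most `|v| |z|²` because `|v_a| ≤ |v|` and `2 |z_b z_c| ≤ z_b² + z_c²`. Hence
`d/dt |z|² = -2|z|² - 4 ⟨B(v,z), z⟩ ≤ 2 (2|v| - 1) |z|² ≤ β |z|²`, and Grönwall's inequality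
concludes.
-/

open Set Real

theorem le_mul_exp_of_hasDerivAt_le_mul {g g' : ℝ → ℝ} {β a b : ℝ}
    (hg : ∀ t ∈ Icc a b, HasDerivAt g (g' t) t) (hle : ∀ t ∈ Ico a b, g' t ≤ β * g t) :
    ∀ t ∈ Icc a b, g t ≤ g a * exp (β * (t - a)) := by
  intro t ht
  rw [← gronwallBound_ε0]
  exact le_gronwallBound_of_liminf_deriv_right_le
    (fun x hx => (hg x hx).continuousAt.continuousWithinAt)
    (fun x hx _ hr => (hg x (Ico_subset_Icc_self hx)).hasDerivWithinAt.liminf_right_slope_le hr)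
    le_rfl (fun x hx => by simpa using hle x hx) t ht

namespace EuclideanSpace

variable {ι : Type*} [Fintype ι]

theorem sum_sq_comp_equiv (w : EuclideanSpace ℝ ι) (σ : ι ≃ ι) :
    ∑ j, w (σ j) ^ 2 = ‖w‖ ^ 2 := by
  rw [Equiv.sum_comp σ (fun j => w j ^ 2), real_norm_sq_eq]

theorem abs_sum_mul_mul_le (v w : EuclideanSpace ℝ ι) (c : ι → ι) (σ τ : ι ≃ ι) :
    |∑ j, v (c j) * w (σ j) * w (τ j)| ≤ ‖v‖ * ‖w‖ ^ 2 := by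
  calc |∑ j, v (c j) * w (σ j) * w (τ j)|
      ≤ ∑ j, |v (c j) * w (σ j) * w (τ j)| := Finset.abs_sum_le_sum_abs _ _
    _ ≤ ∑ j, ‖v‖ * ((w (σ j) ^ 2 + w (τ j) ^ 2) / 2) := by
        refine Finset.sum_le_sum fun j _ => ?_
        have amgm : |w (σ j) * w (τ j)| ≤ (w (σ j) ^ 2 + w (τ j) ^ 2) / 2 := by
          rw [abs_mul]
          nlinarith [sq_nonneg (|w (σ j)| - |w (τ j)|), sq_abs (w (σ j)), sq_abs (w (τ j))]
        rw [mul_assoc, abs_mul]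
        exact mul_le_mul (PiLp.norm_apply_le v (c j)) amgm (abs_nonneg _) (norm_nonneg _)
    _ = ‖v‖ * ‖w‖ ^ 2 := by
        rw [← Finset.mul_sum, ← Finset.sum_div, Finset.sum_add_distrib, sum_sq_comp_equiv,
          sum_sq_comp_equiv]
        ring

theorem real_inner_eq_sum (x y : EuclideanSpace ℝ ι) : ⟪x, y⟫ = ∑ j, x j * y j := by
  simp [PiLp.inner_apply, mul_comm]

end EuclideanSpace

section L96

variable {J : ℕ} [NeZero J]

theorem two_mul_inner_L96B (v z : EuclideanSpace ℝ (ZMod J)) :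
    2 * ⟪L96B v z, z⟫ = ∑ j, v j * z (j - 1) * z (j + 1) - ∑ j, v (j + 2) * z j * z (j + 1) := by
  have idx₁ : ∀ j : ZMod J, j + 1 - 1 = j := fun j => by ring
  have idx₂ : ∀ j : ZMod J, j + 1 + 1 = j + 2 := fun j => by ring
  have idx₃ : ∀ j : ZMod J, j + 1 - 2 = j - 1 := fun j => by ring
  -- the four terms of `⟪L96B v z, z⟫` match the two sums on the right and each other
  -- after the shift `j ↦ j + 1`, so the difference telescopes
  set g : ZMod J → ℝ := fun j => z (j - 1) * v (j + 1) * z j - z (j - 2) * v (j - 1) * z j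
    - v (j - 2) * z (j - 1) * z j
  have telescope : ∑ j, (g (j + 1) - g j) = 0 := by
    rw [Finset.sum_sub_distrib, sub_eq_zero]
    exact Equiv.sum_comp (Equiv.addRight 1) g
  rw [EuclideanSpace.real_inner_eq_sum, Finset.mul_sum, ← Finset.sum_sub_distrib, ← sub_eq_zero,
    ← Finset.sum_sub_distrib, ← telescope]
  refine Finset.sum_congr rfl fun j _ => ?_
  simp only [g, L96B, PiLp.toLp_apply, idx₁, idx₂, idx₃]
  ring

theorem inner_L96B_self (z : EuclideanSpace ℝ (ZMod J)) : ⟪L96B z z, z⟫ = 0 := by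
  have shift : ∑ j, z (j + 2) * z j * z (j + 1) = ∑ j, z j * z (j - 1) * z (j + 1) := by
    rw [← Equiv.sum_comp (Equiv.addRight (1 : ZMod J)) fun j => z j * z (j - 1) * z (j + 1)]
    refine Finset.sum_congr rfl fun j _ => ?_
    simp only [Equiv.coe_addRight, add_sub_cancel_right, add_assoc, one_add_one_eq_two]
    ring
  linarith [two_mul_inner_L96B z z]

theorem abs_inner_L96B_le (v z : EuclideanSpace ℝ (ZMod J)) :
    |⟪L96B v z, z⟫| ≤ ‖v‖ * ‖z‖ ^ 2 := by
  have h₁ := EuclideanSpace.abs_sum_mul_mul_le v z id (Equiv.subRight 1) (Equiv.addRight 1)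
  have h₂ := EuclideanSpace.abs_sum_mul_mul_le v z (· + 2) (Equiv.refl _) (Equiv.addRight 1)
  simp only [id, Equiv.subRight_apply, Equiv.coe_addRight, Equiv.refl_apply] at h₁ h₂
  have h := two_mul_inner_L96B v z
  rw [abs_le] at h₁ h₂ ⊢
  constructor <;> linarith

theorem L96B_add_add (v z : EuclideanSpace ℝ (ZMod J)) :
    L96B (v + z) (v + z) = L96B v v + (2 : ℝ) • L96B v z + L96B z z := by
  ext j
  simp only [L96B, PiLp.add_apply, PiLp.smul_apply, PiLp.toLp_apply, smul_eq_mul]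
  ring

theorem L96Sol.hasDerivAt_norm_sub_sq {F : ℝ} {I : Set ℝ} {u v : ℝ → EuclideanSpace ℝ (ZMod J)}
    (hu : L96Sol F I u) (hv : L96Sol F I v) {t : ℝ} (ht : t ∈ I) :
    HasDerivAt (fun s => ‖u s - v s‖ ^ 2)
      (-2 * ‖u t - v t‖ ^ 2 - 4 * ⟪L96B (v t) (u t - v t), u t - v t⟫) t := by
  set z := u t - v t with hz_def
  have hz : HasDerivAt (fun s => u s - v s) (-z - (2 : ℝ) • L96B (v t) z - L96B z z) t := by
    refine ((hu t ht).sub (hv t ht)).congr_deriv ?_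
    have hu_eq : u t = v t + z := (add_sub_cancel _ _).symm
    rw [hu_eq, L96B_add_add]
    abel
  convert hz.norm_sq using 1
  rw [← hz_def]
  simp only [inner_sub_right, inner_neg_right, inner_smul_right, real_inner_self_eq_norm_sq]
  rw [real_inner_comm (L96B z z), inner_L96B_self, real_inner_comm (L96B (v t) z)]
  ring

end L96

theorem l96_two_solution_growth_general {J : ℕ} [NeZero J]
    (F : ℝ) (K β T : ℝ)
    (hβ : β = 2 * (2 * Real.sqrt K - 1))
    (u v : ℝ → EuclideanSpace ℝ (ZMod J))
    (hu : L96Sol F (Set.Icc 0 T) u) (hv : L96Sol F (Set.Icc 0 T) v)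
    (hvK : ∀ t ∈ Set.Icc (0:ℝ) T, ‖v t‖ ^ 2 ≤ K) :
    ∀ t ∈ Set.Icc (0:ℝ) T,
      ‖u t - v t‖ ^ 2 ≤ ‖u 0 - v 0‖ ^ 2 * Real.exp (β * t) := by
  intro t ht
  have growth : ∀ s ∈ Ico 0 T,
      -2 * ‖u s - v s‖ ^ 2 - 4 * ⟪L96B (v s) (u s - v s), u s - v s⟫ ≤ β * ‖u s - v s‖ ^ 2 := by
    intro s hs
    have hvs : ‖v s‖ ≤ √K := by simpa using Real.abs_le_sqrt (hvK s (Ico_subset_Icc_self hs))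
    have hB := (abs_le.1 (abs_inner_L96B_le (v s) (u s - v s))).1
    rw [hβ]
    nlinarith [sq_nonneg ‖u s - v s‖]
  simpa using le_mul_exp_of_hasDerivAt_le_mul (fun s hs => hu.hasDerivAt_norm_sub_sq hv hs)
    growth t ht

/-- two-solution growth bound
`|u(t) − v(t)|² ≤ |u(0) − v(0)|² e^{βt}` with `β = 2(2√K − 1)`, `K = 2JF²`. -/
theorem l96_two_solution_growth {J : ℕ} [NeZero J] (hJ : 3 ≤ J)
    (F : ℝ) (hF : 0 < F) (K β T : ℝ)
    (hK : K = 2 * J * F ^ 2) (hβ : β = 2 * (2 * Real.sqrt K - 1))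
    (u v : ℝ → EuclideanSpace ℝ (ZMod J))
    (hu : L96Sol F (Set.Icc 0 T) u) (hv : L96Sol F (Set.Icc 0 T) v)
    (hvK : ∀ t ∈ Set.Icc (0:ℝ) T, ‖v t‖ ^ 2 ≤ K) :
    ∀ t ∈ Set.Icc (0:ℝ) T,
      ‖u t - v t‖ ^ 2 ≤ ‖u 0 - v 0‖ ^ 2 * Real.exp (β * t) :=
  l96_two_solution_growth_general F K β T hβ u v hu hv hvK
end
end
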